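/- Let δ₁, …, δ_M, δ_{M+1} be exchangeable real-valued random variables, let α ∈ (0,1), let n = ⌈(M+1)(1−α)⌉, and assume n ≤ M. If c is the n-th smallest value among δ₁, …, δ_M, then P(δ_{M+1} ≤ c) ≥ 1 − α. -/

import Mathlib

open MeasureTheory ProbabilityTheory
open scoped ENNReal NNReal

lemma mem_take_le (s : List ℝ) (hs : s.Pairwise (· ≤ ·)) (k : ℕ) (hk : k < s.length)
    (y : ℝ) (hy : y ∈ s.take (k+1)) : y ≤ s.get ⟨k, hk⟩ := by
  obtain ⟨i, hi, hget⟩ := List.mem_iff_getElem.mp hy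
  have hil : i < k + 1 := lt_of_lt_of_le hi (by simp [List.length_take])
  have h2 : (s.take (k+1))[i] = s[i]'(by omega) := List.getElem_take
  rw [← hget, h2]
  exact hs.rel_get_of_le (a := ⟨i, by omega⟩) (b := ⟨k, hk⟩) (by simp [Fin.le_def]; omega)

lemma mem_drop_ge (s : List ℝ) (hs : s.Pairwise (· ≤ ·)) (k : ℕ) (hk : k < s.length)
    (y : ℝ) (hy : y ∈ s.drop k) : s.get ⟨k, hk⟩ ≤ y := by
  obtain ⟨i, hi, hget⟩ := List.mem_iff_getElem.mp hy
  have hi' : k + i < s.length := by simp [List.length_drop] at hi; omega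
  have h2 : (s.drop k)[i] = s[k + i]'hi' := List.getElem_drop
  rw [← hget, h2]
  exact hs.rel_get_of_le (a := ⟨k, hk⟩) (b := ⟨k + i, hi'⟩) (by simp [Fin.le_def])

lemma sorted_le_getD_iff (s : List ℝ) (hs : s.Pairwise (· ≤ ·)) (k : ℕ) (hk : k < s.length) (x : ℝ) :
    x ≤ s.getD k 0 ↔ s.countP (fun y => decide (y < x)) ≤ k := by
  set p : ℝ → Bool := fun y => decide (y < x) with hp
  rw [List.getD_eq_getElem s 0 hk]
  constructor
  · intro hx
    have hsplit : s.countP p = (s.take k).countP p + (s.drop k).countP p := by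
      conv_lhs => rw [← List.take_append_drop k s]
      exact List.countP_append
    have h1 : (s.take k).countP p ≤ k :=
      List.countP_le_length.trans (by simp [List.length_take])
    have h2 : (s.drop k).countP p = 0 := by
      rw [List.countP_eq_zero]
      intro y hy
      simp only [hp, decide_eq_true_eq, not_lt]
      exact hx.trans (mem_drop_ge s hs k hk y hy)
    omega
  · intro hcount
    by_contra hlt
    push_neg at hlt
    have hall : (s.take (k+1)).countP p = (s.take (k+1)).length := by
      rw [List.countP_eq_length]
      intro y hy
      simp only [hp, decide_eq_true_eq]
      exact lt_of_le_of_lt (mem_take_le s hs k hk y hy) hlt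
    have hlen : (s.take (k+1)).length = k + 1 := by simp [List.length_take]; omega
    have := (List.take_sublist (k+1) s).countP_le (p := p)
    omega

lemma sorted_getD_countP_le (s : List ℝ) (hs : s.Pairwise (· ≤ ·)) (k : ℕ) (hk : k < s.length) :
    k + 1 ≤ s.countP (fun y => decide (y ≤ s.getD k 0)) := by
  set p : ℝ → Bool := fun y => decide (y ≤ s.getD k 0) with hp
  have hall : (s.take (k+1)).countP p = (s.take (k+1)).length := by
    rw [List.countP_eq_length]
    intro y hy
    simp only [hp, decide_eq_true_eq, List.getD_eq_getElem s 0 hk]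
    exact mem_take_le s hs k hk y hy
  have hlen : (s.take (k+1)).length = k + 1 := by simp [List.length_take]; omega
  have := (List.take_sublist (k+1) s).countP_le (p := p)
  omega

lemma countP_ofFn {m : ℕ} (f : Fin m → ℝ) (p : ℝ → Bool) :
    (List.ofFn f).countP p = (Finset.univ.filter fun i => p (f i)).card := by
  rw [List.ofFn_eq_map, List.countP_map]
  rw [Fin.univ_def, Finset.filter, Finset.card]
  simp [Multiset.countP_eq_card_filter, List.countP_eq_length_filter, Function.comp_def]

lemma card_filter_castSucc {m : ℕ} (p : Fin (m+1) → Prop) [DecidablePred p]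
    (hlast : ¬ p (Fin.last m)) :
    (Finset.univ.filter p).card = (Finset.univ.filter fun i : Fin m => p i.castSucc).card := by
  rw [Fin.univ_castSuccEmb, Finset.filter_cons, if_neg hlast, Finset.filter_map, Finset.card_map]
  rfl

lemma card_filter_perm {m : ℕ} (σ : Equiv.Perm (Fin m)) (p : Fin m → Prop) [DecidablePred p] :
    (Finset.univ.filter fun i => p (σ i)).card = (Finset.univ.filter p).card := by
  apply Finset.card_bij (fun i _ => σ i)
  · intro a ha; simp at ha ⊢; exact ha
  · intro a _ b _ h; exact σ.injective h
  · intro b hb; exact ⟨σ.symm b, by simp at hb ⊢; simpa using hb⟩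

lemma count_good_ge {m : ℕ} (x : Fin (m+1) → ℝ) (n : ℕ) (hn1 : 1 ≤ n) (hnm : n ≤ m + 1) :
    n ≤ (Finset.univ.filter fun j : Fin (m+1) =>
        (Finset.univ.filter fun i => x i < x j).card ≤ n - 1).card := by
  set L : List ℝ := List.ofFn x with hL
  set l : List ℝ := (Multiset.ofList L).sort (· ≤ ·) with hl
  have hperm : l.Perm L := Multiset.coe_eq_coe.mp (Multiset.sort_eq _ _)
  have hsorted : l.Pairwise (· ≤ ·) := Multiset.pairwise_sort _ _
  have hlen : l.length = m + 1 := by simp [hl, hL]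
  have hk : n - 1 < l.length := by omega
  set t : ℝ := l.getD (n-1) 0 with ht
  have ha : n ≤ (Finset.univ.filter fun j : Fin (m+1) => x j ≤ t).card := by
    have h1 := sorted_getD_countP_le l hsorted (n-1) hk
    rw [hperm.countP_eq] at h1
    rw [countP_ofFn x (fun y => decide (y ≤ t))] at h1
    calc n = n - 1 + 1 := by omega
    _ ≤ _ := h1.trans (le_of_eq (by apply Finset.card_nbij id <;> simp [Set.InjOn, Set.SurjOn, Set.MapsTo]))
  refine ha.trans (Finset.card_le_card ?_)
  intro j hj
  simp only [Finset.mem_filter, Finset.mem_univ, true_and] at hj ⊢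
  have hsub : (Finset.univ.filter fun i => x i < x j) ⊆ (Finset.univ.filter fun i => x i < t) := by
    intro i hi
    simp only [Finset.mem_filter, Finset.mem_univ, true_and] at hi ⊢
    exact lt_of_lt_of_le hi hj
  have h2 := (sorted_le_getD_iff l hsorted (n-1) hk t).mp (le_of_eq ht)
  rw [hperm.countP_eq, countP_ofFn x (fun y => decide (y < t))] at h2
  have h3 : (Finset.univ.filter fun i => x i < t).card ≤ n - 1 := by simpa using h2
  exact (Finset.card_le_card hsub).trans h3

lemma measurable_count {Ω : Type*} [MeasurableSpace Ω] {m : ℕ} (f : Fin m → Ω → ℝ)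
    (hf : ∀ i, Measurable (f i)) (j : Fin m) :
    Measurable fun ω => (Finset.univ.filter fun i => f i ω < f j ω).card := by
  have h : (fun ω => (Finset.univ.filter fun i => f i ω < f j ω).card)
      = fun ω => ∑ i : Fin m, if f i ω < f j ω then 1 else 0 := by
    funext ω; rw [Finset.card_filter]
  rw [h]
  exact Finset.measurable_sum _ fun i _ =>
    Measurable.ite (measurableSet_lt (hf i) (hf j)) measurable_const measurable_const

lemma measurableSet_count_le {Ω : Type*} [MeasurableSpace Ω] {m : ℕ} (f : Fin m → Ω → ℝ)
    (hf : ∀ i, Measurable (f i)) (j : Fin m) (k : ℕ) :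
    MeasurableSet {ω | (Finset.univ.filter fun i => f i ω < f j ω).card ≤ k} :=
  measurable_count f hf j (measurableSet_Iic (a := k))

/-- Split conformal prediction guarantee (lower coverage bound): for exchangeable
scores `δ 0, …, δ M`, the `n`-th order statistic of the first `M` scores with
`n = ⌈(M+1)(1−α)⌉` covers the last score with probability at least `1 − α`. -/
theorem conformal_coverage_lower
    {Ω : Type*} [MeasurableSpace Ω] (μ : Measure Ω) [IsProbabilityMeasure μ]
    (M : ℕ) (δ : Fin (M + 1) → Ω → ℝ) (hmeas : ∀ i, Measurable (δ i))
    (hexch : ∀ σ : Equiv.Perm (Fin (M + 1)),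
      Measure.map (fun ω => fun i => δ (σ i) ω) μ
        = Measure.map (fun ω => fun i => δ i ω) μ)
    (α : ℝ) (hα : α ∈ Set.Ioo (0 : ℝ) 1)
    (n : ℕ) (hn : n = ⌈((M : ℝ) + 1) * (1 - α)⌉₊) (hnM : n ≤ M)
    (c : Ω → ℝ)
    (hc : ∀ ω, c ω =
      (((Multiset.ofList (List.ofFn fun i : Fin M => δ i.castSucc ω)).sort (· ≤ ·)).getD
        (n - 1) 0)) :
    ENNReal.ofReal (1 - α) ≤ μ {ω | δ (Fin.last M) ω ≤ c ω} := by
  obtain ⟨hα0, hα1⟩ := hα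
  have hn1 : 1 ≤ n := by
    rw [hn]
    rw [Nat.one_le_iff_ne_zero, ← Nat.pos_iff_ne_zero, Nat.ceil_pos]
    have : (0:ℝ) < (M:ℝ) + 1 := by positivity
    nlinarith
  set A : Fin (M+1) → Set Ω :=
    fun j => {ω | (Finset.univ.filter fun i => δ i ω < δ j ω).card ≤ n - 1} with hA
  have hAmeas : ∀ j, MeasurableSet (A j) := fun j => measurableSet_count_le δ hmeas j (n-1)
  -- the target set equals A (last M)
  have htarget : {ω | δ (Fin.last M) ω ≤ c ω} = A (Fin.last M) := by
    ext ω
    simp only [Set.mem_setOf_eq, hA]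
    rw [hc ω]
    set L : List ℝ := List.ofFn fun i : Fin M => δ i.castSucc ω with hL
    set l : List ℝ := (Multiset.ofList L).sort (· ≤ ·) with hl
    have hperm : l.Perm L := Multiset.coe_eq_coe.mp (Multiset.sort_eq _ _)
    have hsorted : l.Pairwise (· ≤ ·) := Multiset.pairwise_sort _ _
    have hlen : l.length = M := by simp [hl, hL]
    rw [sorted_le_getD_iff l hsorted (n-1) (by omega)]
    rw [hperm.countP_eq, hL, countP_ofFn]
    have hcard : (Finset.univ.filter fun i : Fin M =>
          (decide (δ i.castSucc ω < δ (Fin.last M) ω) : Prop)).card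
        = (Finset.univ.filter fun i : Fin (M+1) => δ i ω < δ (Fin.last M) ω).card := by
      rw [card_filter_castSucc (p := fun i : Fin (M+1) => δ i ω < δ (Fin.last M) ω) (by simp)]
      apply Finset.card_nbij id <;> simp [Set.InjOn, Set.SurjOn, Set.MapsTo]
    rw [hcard]
  -- all A j have the same measure
  set S : Set (Fin (M+1) → ℝ) :=
    {x | (Finset.univ.filter fun i => x i < x (Fin.last M)).card ≤ n - 1} with hS
  have hSmeas : MeasurableSet S :=
    measurableSet_count_le (fun i (x : Fin (M+1) → ℝ) => x i)
      (fun i => measurable_pi_apply i) (Fin.last M) (n-1)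
  have hF : Measurable (fun ω => fun i => δ i ω) := measurable_pi_lambda _ hmeas
  have hμA : ∀ j, μ (A (Fin.last M)) = μ (A j) := by
    intro j
    set σ := Equiv.swap j (Fin.last M) with hσ
    have hG : Measurable (fun ω => fun i => δ (σ i) ω) :=
      measurable_pi_lambda _ (fun i => hmeas _)
    have h1 : μ (A (Fin.last M)) = Measure.map (fun ω => fun i => δ i ω) μ S := by
      rw [Measure.map_apply hF hSmeas]; rfl
    have h2 : Measure.map (fun ω => fun i => δ (σ i) ω) μ S
        = μ ((fun ω => fun i => δ (σ i) ω) ⁻¹' S) := Measure.map_apply hG hSmeas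
    have h3 : (fun ω => fun i => δ (σ i) ω) ⁻¹' S = A j := by
      ext ω
      have hlastσ : σ (Fin.last M) = j := Equiv.swap_apply_right _ _
      simp only [Set.mem_preimage, hS, Set.mem_setOf_eq, hA, hlastσ]
      rw [card_filter_perm σ (fun i => δ i ω < δ j ω)]
    rw [h1, ← hexch σ, h2, h3]
  -- the sum bound
  have hsum : (n : ℝ≥0∞) ≤ (M + 1 : ℕ) * μ (A (Fin.last M)) := by
    have hpt : ∀ ω, (n : ℝ≥0∞) ≤ ∑ j : Fin (M+1), (A j).indicator (1 : Ω → ℝ≥0∞) ω := by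
      intro ω
      have hcard : ∑ j : Fin (M+1), (A j).indicator (1 : Ω → ℝ≥0∞) ω
          = ((Finset.univ.filter fun j => ω ∈ A j).card : ℝ≥0∞) := by
        rw [Finset.card_filter]
        push_cast
        simp [Set.indicator_apply]
      rw [hcard]
      have := count_good_ge (fun i => δ i ω) n hn1 (by omega)
      exact_mod_cast this
    calc (n : ℝ≥0∞) = ∫⁻ _, (n : ℝ≥0∞) ∂μ := by simp
    _ ≤ ∫⁻ ω, ∑ j : Fin (M+1), (A j).indicator (1 : Ω → ℝ≥0∞) ω ∂μ := lintegral_mono hpt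
    _ = ∑ j : Fin (M+1), ∫⁻ ω, (A j).indicator (1 : Ω → ℝ≥0∞) ω ∂μ :=
        lintegral_finset_sum _ (fun j _ => measurable_const.indicator (hAmeas j))
    _ = ∑ j : Fin (M+1), μ (A j) := by
        refine Finset.sum_congr rfl fun j _ => ?_
        rw [lintegral_indicator_one (hAmeas j)]
    _ = ∑ _j : Fin (M+1), μ (A (Fin.last M)) := Finset.sum_congr rfl fun j _ => (hμA j).symm
    _ = (M + 1 : ℕ) * μ (A (Fin.last M)) := by
        rw [Finset.sum_const, Finset.card_univ, Fintype.card_fin, nsmul_eq_mul]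
  -- conclude
  rw [htarget]
  have hreal : ((M:ℝ) + 1) * (1 - α) ≤ (n : ℝ) := by rw [hn]; exact Nat.le_ceil _
  have h4 : ENNReal.ofReal (1 - α) * ((M + 1 : ℕ) : ℝ≥0∞) ≤ (n : ℝ≥0∞) := by
    have : ((M + 1 : ℕ) : ℝ≥0∞) = ENNReal.ofReal ((M:ℝ) + 1) := by
      rw [ENNReal.ofReal]; push_cast; simp
    rw [this, ← ENNReal.ofReal_mul (by linarith), ← ENNReal.ofReal_natCast n]
    exact ENNReal.ofReal_le_ofReal (by nlinarith)
  have h5 : ENNReal.ofReal (1 - α) * ((M + 1 : ℕ) : ℝ≥0∞)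
      ≤ μ (A (Fin.last M)) * ((M + 1 : ℕ) : ℝ≥0∞) := by
    refine h4.trans ?_
    rw [mul_comm]
    exact hsum
  exact (ENNReal.mul_le_mul_iff_left (by simp) (by simp)).mp h5
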